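/- arXiv:2202.09296 — 4 statements merged into one kernel-verified Lean document; each statement's English description precedes it below -/
import Mathlib

section
/- For every integer m ≥ 3 and every positive integer n, there exists a finite sequence a of positive integers such that R'(a) = T(n); that is, a tight T(n)-universal m-gonal form exists for every pair (m, n). -/
/-- `s` is a generalized `m`-gonal number, i.e. `s = ((m-2)u^2 - (m-4)u)/2` for some `u ∈ ℤ`. -/
def IsGP (m s : ℤ) : Prop := ∃ u : ℤ, 2 * s = (m - 2) * u ^ 2 - (m - 4) * u

/-- `R'(a)`: the set of nonzero integers represented by the `m`-gonal form with
coefficient sequence `a`, i.e. expressible as `a₁s₁ + ⋯ + aₖsₖ` with each `sᵢ ∈ GP_m`. -/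
def Rset (m : ℤ) (a : List ℤ) : Set ℤ :=
  {x | x ≠ 0 ∧ ∃ s : List ℤ, s.length = a.length ∧ (∀ y ∈ s, IsGP m y) ∧
      x = (List.zipWith (· * ·) a s).sum}

/-!
Take `a = [n, n+1, …, 2n-1] ++ [n, …, n] ++ [n, …, n]` with `m - 3` and `8` copies of `n` in the
two blocks. All coefficients are `≥ n` and generalized `m`-gonal numbers are `≥ 0`, so every nonzero
value is `≥ n`. Conversely write `x ≥ n` as `(n + r) + n k` with `0 ≤ r < n`, `k ≥ 0`: the first
summand is a coefficient, and `k = (m-2) M + j` with `j < m - 2`, where `j` is taken with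
`P_m(1) = 1` in the first block and `(m-2) M` with the identity `P_m(u) + P_m(-u) = (m-2) u²`
and Lagrange's four-square theorem in the second.
-/

theorem isGP_zero (m : ℤ) : IsGP m 0 := ⟨0, by ring⟩

theorem isGP_one (m : ℤ) : IsGP m 1 := ⟨1, by ring⟩

theorem IsGP.nonneg {m s : ℤ} (hm : 3 ≤ m) (h : IsGP m s) : 0 ≤ s := by
  obtain ⟨u, hu⟩ := h
  rcases lt_trichotomy u 0 with hu0 | rfl | hu0
  · nlinarith [mul_nonneg (by linarith : (0 : ℤ) ≤ -u)
      (by nlinarith : (0 : ℤ) ≤ (m - 4) - (m - 2) * u)]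
  · linarith
  · nlinarith [mul_nonneg hu0.le (by nlinarith : (0 : ℤ) ≤ (m - 2) * u - (m - 4))]

theorem exists_isGP_add_eq_mul_sq (m u : ℤ) :
    ∃ s t, IsGP m s ∧ IsGP m t ∧ s + t = (m - 2) * u ^ 2 := by
  obtain ⟨k₁, hk₁⟩ := Int.even_mul_succ_self (u - 1)
  obtain ⟨k₂, hk₂⟩ := Int.even_mul_succ_self u
  refine ⟨(m - 2) * k₁ + u, (m - 2) * k₂ - u, ⟨u, ?_⟩, ⟨-u, ?_⟩, ?_⟩
  · linear_combination (2 - m) * hk₁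
  · linear_combination (2 - m) * hk₂
  · have : k₁ + k₂ = u ^ 2 := by linarith
    linear_combination (m - 2) * this

theorem sum_zipWith_mul_eq_zero_or_le {n : ℤ} (hn : 0 ≤ n) :
    ∀ {a s : List ℤ}, (∀ c ∈ a, n ≤ c) → (∀ y ∈ s, 0 ≤ y) →
      (List.zipWith (· * ·) a s).sum = 0 ∨ n ≤ (List.zipWith (· * ·) a s).sum
  | [], _, _, _ | _ :: _, [], _, _ => by simp
  | c :: a, y :: s, ha, hs => by
    simp only [List.forall_mem_cons] at ha hs
    have ih := sum_zipWith_mul_eq_zero_or_le hn ha.2 hs.2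
    simp only [List.zipWith_cons_cons, List.sum_cons]
    rcases hs.1.eq_or_lt with rfl | hy
    · simpa using ih
    · right
      have : c ≤ c * y := le_mul_of_one_le_right (by linarith [ha.1]) hy
      rcases ih with h | h <;> linarith [ha.1]

def Represents (m : ℤ) (a : List ℤ) (x : ℤ) : Prop :=
  ∃ s : List ℤ, s.length = a.length ∧ (∀ y ∈ s, IsGP m y) ∧
    x = (List.zipWith (· * ·) a s).sum

theorem rset_eq_setOf_represents (m : ℤ) (a : List ℤ) :
    Rset m a = {x | x ≠ 0 ∧ Represents m a x} :=
  rfl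

namespace Represents

variable {m : ℤ}

theorem nil : Represents m [] 0 := ⟨[], rfl, by simp, by simp⟩

theorem cons {c s t : ℤ} {a : List ℤ} (hs : IsGP m s) (ht : Represents m a t) :
    Represents m (c :: a) (c * s + t) := by
  obtain ⟨l, hl, hgp, rfl⟩ := ht
  exact ⟨s :: l, by simp [hl], List.forall_mem_cons.2 ⟨hs, hgp⟩, by simp⟩

theorem append {a b : List ℤ} {x y : ℤ} (hx : Represents m a x) (hy : Represents m b y) :
    Represents m (a ++ b) (x + y) := by
  obtain ⟨s, hs, hgs, rfl⟩ := hx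
  obtain ⟨t, ht, hgt, rfl⟩ := hy
  refine ⟨s ++ t, by simp [hs, ht], fun z hz => ?_, ?_⟩
  · rcases List.mem_append.1 hz with h | h
    exacts [hgs z h, hgt z h]
  · rw [List.zipWith_append hs.symm, List.sum_append]

theorem zero (a : List ℤ) : Represents m a 0 := by
  induction a with
  | nil => exact nil
  | cons c a ih => simpa using ih.cons (c := c) (isGP_zero m)

theorem of_mem {c : ℤ} {a : List ℤ} (h : c ∈ a) : Represents m a c := by
  induction a with
  | nil => simp at h
  | cons c' a ih =>
    rcases List.mem_cons.1 h with rfl | h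
    · simpa using (zero (m := m) a).cons (c := c) (isGP_one m)
    · simpa using (ih h).cons (c := c') (isGP_zero m)

theorem replicate_mul (c : ℤ) : ∀ {j k : ℕ}, j ≤ k → Represents m (List.replicate k c) (c * j)
  | 0, k, _ => by simpa using zero (m := m) (List.replicate k c)
  | j + 1, k + 1, h => by
    simpa [List.replicate_succ, mul_add, add_comm] using
      (replicate_mul c (Nat.le_of_succ_le_succ h)).cons (c := c) (isGP_one m)

theorem pair_mul_sq (c u : ℤ) : Represents m [c, c] (c * ((m - 2) * u ^ 2)) := by
  obtain ⟨s, t, hs, ht, hst⟩ := exists_isGP_add_eq_mul_sq m u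
  simpa [← hst, mul_add] using (nil.cons (c := c) ht).cons (c := c) hs

theorem replicate_eight_mul (c : ℤ) {M : ℤ} (hM : 0 ≤ M) :
    Represents m (List.replicate 8 c) (c * ((m - 2) * M)) := by
  obtain ⟨p, q, r, s, hpqrs⟩ := Nat.sum_four_squares M.toNat
  have hM' : M = (p : ℤ) ^ 2 + q ^ 2 + r ^ 2 + s ^ 2 := by
    rw [← Int.toNat_of_nonneg hM, ← hpqrs]; push_cast; ring
  have h := (pair_mul_sq (m := m) c p).append <| (pair_mul_sq c q).append <|
    (pair_mul_sq c r).append (pair_mul_sq c s)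
  rw [hM']
  convert h using 1
  · rfl
  · ring

theorem replicate_append_replicate_mul (hm : 3 ≤ m) (c : ℤ) {k : ℤ} (hk : 0 ≤ k) :
    Represents m (List.replicate (m - 3).toNat c ++ List.replicate 8 c) (c * k) := by
  have hj := (replicate_mul (m := m) c (j := (k % (m - 2)).toNat) (k := (m - 3).toNat)
    (by have := Int.emod_lt_of_pos k (by omega : 0 < m - 2); omega)).append
    (replicate_eight_mul c (Int.ediv_nonneg hk (by omega : 0 ≤ m - 2)))
  convert hj using 1
  rw [Int.toNat_of_nonneg (Int.emod_nonneg k (by omega)), ← mul_add, Int.emod_add_mul_ediv]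

end Represents

/-- For every integer `m ≥ 3` and every positive integer `n`, there exists a finite sequence
of positive integers `a` with `R'(a) = T(n)`, i.e. a tight `T(n)`-universal `m`-gonal form. -/
theorem tight_universal_exists (m n : ℤ) (hm : 3 ≤ m) (hn : 1 ≤ n) :
    ∃ a : List ℤ, (∀ x ∈ a, 0 < x) ∧ Rset m a = Set.Ici n := by
  set a := (List.range n.toNat).map (fun r : ℕ => n + r) ++
    (List.replicate (m - 3).toNat n ++ List.replicate 8 n)
  have ha : ∀ c ∈ a, n ≤ c := by
    simp only [a, List.mem_append, List.mem_map, List.mem_replicate]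
    omega
  refine ⟨a, fun c hc => by linarith [ha c hc], ?_⟩
  rw [rset_eq_setOf_represents]
  ext x
  refine ⟨fun ⟨hx, s, _, hs, hsum⟩ => ?_, fun (hx : n ≤ x) => ⟨by omega, ?_⟩⟩
  · rw [hsum] at hx ⊢
    exact (sum_zipWith_mul_eq_zero_or_le (by omega) ha
      fun y hy => (hs y hy).nonneg hm).resolve_left hx
  · have hr : n + (x - n) % n ∈ (List.range n.toNat).map fun r : ℕ => n + r := by
      have := Int.emod_lt_of_pos (x - n) (by omega : 0 < n)
      have := Int.emod_nonneg (x - n) (by omega : n ≠ 0)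
      exact List.mem_map.2 ⟨((x - n) % n).toNat, List.mem_range.2 (by omega), by omega⟩
    have h := (Represents.of_mem hr).append <| Represents.replicate_append_replicate_mul hm n <|
      Int.ediv_nonneg (by omega : 0 ≤ x - n) (by omega : 0 ≤ n)
    convert h using 1
    linarith [Int.emod_add_mul_ediv (x - n) n]
end

section
/- Let m ≥ 3 be an integer with m ≠ 5 and let n ≥ 2 be an integer. Then for every integer i with 0 ≤ i ≤ n−1, the least element of T(n) \ R'((n, n+1, …, n+i)) is n+i+1; in particular, the m-gonal form n·P_m(x_0) + (n+1)·P_m(x_1) + ⋯ + (n+i)·P_m(x_i) represents all integers n, n+1, …, n+i but does not represent n+i+1. -/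
namespace IsGP

theorem zero (m : ℤ) : IsGP m 0 := ⟨0, by ring⟩

theorem one (m : ℤ) : IsGP m 1 := ⟨1, by ring⟩

variable {m s : ℤ}

/-- For `m ≥ 3` both summands are nonnegative, since `u (u ± 1) ≥ 0` for every integer `u`. -/
theorem exists_two_mul_eq (h : IsGP m s) :
    ∃ u : ℤ, 2 * s = (m - 3) * (u * (u - 1)) + u * (u + 1) :=
  h.imp fun u hu => by rw [hu]; ring

theorem nonneg_s5 (hm : 3 ≤ m) (h : IsGP m s) : 0 ≤ s := by
  obtain ⟨u, hu⟩ := h.exists_two_mul_eq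
  have h₁ : 0 ≤ u * (u - 1) := by rcases le_or_gt u 0 with h | h <;> nlinarith
  have h₂ : 0 ≤ u * (u + 1) := by rcases le_or_gt u (-1) with h | h <;> nlinarith
  nlinarith [mul_nonneg (sub_nonneg.2 hm) h₁]

/-- `m = 5` is excluded because `2 = P₅(-1)`. -/
theorem ne_two (hm : 3 ≤ m) (hm5 : m ≠ 5) (h : IsGP m s) : s ≠ 2 := by
  rintro rfl
  obtain ⟨u, hu⟩ := h.exists_two_mul_eq
  have h₁ : 0 ≤ (m - 3) * (u * (u - 1)) := by
    rcases le_or_gt u 0 with h | h <;> exact mul_nonneg (by omega) (by nlinarith)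
  obtain ⟨hl, hr⟩ : -2 ≤ u ∧ u ≤ 2 := by constructor <;> nlinarith
  interval_cases u <;> omega

end IsGP

theorem exists_isGP_sum_eq (m : ℤ) {a : List ℤ} {x : ℤ} (hx : x = 0 ∨ x ∈ a) :
    ∃ s : List ℤ, s.length = a.length ∧ (∀ y ∈ s, IsGP m y) ∧
      x = (List.zipWith (· * ·) a s).sum := by
  induction a generalizing x with
  | nil => exact ⟨[], rfl, by simp, by simpa using hx⟩
  | cons b a ih =>
    by_cases hxb : x = b
    · obtain ⟨s, hlen, hgp, hsum⟩ := ih (x := 0) (Or.inl rfl)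
      refine ⟨1 :: s, by simp [hlen], ?_, by simp [← hsum, hxb]⟩
      simpa [IsGP.one] using hgp
    · obtain ⟨s, hlen, hgp, hsum⟩ := ih (x := x) (by simpa [hxb] using hx)
      refine ⟨0 :: s, by simp [hlen], ?_, by simp [← hsum]⟩
      simpa [IsGP.zero] using hgp

theorem mem_Rset_of_mem (m : ℤ) {a : List ℤ} {x : ℤ} (hx : x ∈ a) (hx0 : x ≠ 0) :
    x ∈ Rset m a :=
  ⟨hx0, exists_isGP_sum_eq m (Or.inr hx)⟩

theorem sum_zipWith_mul_nonneg {a s : List ℤ} (ha : ∀ x ∈ a, 0 ≤ x) (hs : ∀ y ∈ s, 0 ≤ y) :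
    0 ≤ (List.zipWith (· * ·) a s).sum := by
  induction a generalizing s with
  | nil => simp
  | cons b a ih =>
    cases s with
    | nil => simp
    | cons t s =>
      simp only [List.mem_cons, forall_eq_or_imp] at ha hs
      simpa using add_nonneg (mul_nonneg ha.1 hs.1) (ih ha.2 hs.2)

/-- Two distinct weights `≥ c` already add up to at least `2c + 1`, and one weight taken
with a coefficient `≥ 3` to at least `3c`. -/
theorem sum_zipWith_mul_eq_zero_or_mem_or_le {c : ℤ} (hc : 1 ≤ c) {a s : List ℤ}
    (hnd : a.Nodup) (ha : ∀ x ∈ a, c ≤ x) (hs : ∀ y ∈ s, 0 ≤ y ∧ y ≠ 2) :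
    (List.zipWith (· * ·) a s).sum = 0 ∨ (List.zipWith (· * ·) a s).sum ∈ a ∨
      2 * c + 1 ≤ (List.zipWith (· * ·) a s).sum := by
  induction a generalizing s with
  | nil => simp
  | cons b a ih =>
    cases s with
    | nil => simp
    | cons t s =>
      simp only [List.mem_cons, forall_eq_or_imp, List.nodup_cons] at ha hs hnd
      have hS₀ : 0 ≤ (List.zipWith (· * ·) a s).sum :=
        sum_zipWith_mul_nonneg (fun x hx => by linarith [ha.2 x hx]) fun y hy => (hs.2 y hy).1
      have hS := ih hnd.2 ha.2 hs.2
      simp only [List.zipWith_cons_cons, List.sum_cons, List.mem_cons]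
      obtain ⟨ht₀, ht₂⟩ := hs.1
      obtain rfl | rfl | ht₃ : t = 0 ∨ t = 1 ∨ 3 ≤ t := by omega
      · simp only [mul_zero, zero_add]
        tauto
      · rcases hS with hS | hS | hS
        · simp [hS]
        · have := ha.2 _ hS
          have : (List.zipWith (· * ·) a s).sum ≠ b := fun h => hnd.1 (h ▸ hS)
          omega
        · omega
      · have : 3 * c ≤ b * t := by nlinarith [ha.1]
        omega

theorem Rset.mem_or_le {m c : ℤ} (hm : 3 ≤ m) (hm5 : m ≠ 5) (hc : 1 ≤ c) {a : List ℤ}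
    (hnd : a.Nodup) (ha : ∀ x ∈ a, c ≤ x) {x : ℤ} (hx : x ∈ Rset m a) :
    x ∈ a ∨ 2 * c + 1 ≤ x := by
  obtain ⟨hx0, s, -, hgp, rfl⟩ := hx
  have := sum_zipWith_mul_eq_zero_or_mem_or_le hc hnd ha fun y hy =>
    ⟨(hgp y hy).nonneg_s5 hm, (hgp y hy).ne_two hm hm5⟩
  tauto

/-- On the left, `l` is coerced to a `List ℤ` through the list monad, which is how the
initial segment `n, n + 1, …, n + i` gets elaborated in the theorem below. -/
theorem map_add_coe_eq (c : ℤ) (l : List ℕ) :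
    l.map (fun j => c + j) = l.map (fun j : ℕ => c + j) := by
  simp only [List.pure_def, List.bind_eq_flatMap, List.map_flatMap, List.map_cons, List.map_nil]
  exact List.flatMap_pure_eq_map _ _

theorem mem_map_range_add_iff {n i : ℕ} {x : ℤ} :
    x ∈ (List.range (i + 1)).map (fun j : ℕ => (n : ℤ) + j) ↔ n ≤ x ∧ x ≤ n + i := by
  simp only [List.mem_map, List.mem_range]
  constructor
  · rintro ⟨j, hj, rfl⟩
    omega
  · rintro ⟨h₁, h₂⟩
    exact ⟨(x - n).toNat, by omega, by omega⟩

theorem nodup_map_range_add (n i : ℕ) :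
    ((List.range (i + 1)).map (fun j : ℕ => (n : ℤ) + j)).Nodup :=
  List.nodup_range.map fun _ _ h => by simpa using h

/-- For `m ≥ 3`, `m ≠ 5` and `n ≥ 2`: for `0 ≤ i ≤ n-1`, the least element of
`T(n) \ R'((n, n+1, …, n+i))` is `n+i+1`; in particular the form represents all of
`n, …, n+i` but not `n+i+1`. -/
theorem psi_of_initial_segment (m : ℤ) (hm : 3 ≤ m) (hm5 : m ≠ 5)
    (n : ℕ) (hn : 2 ≤ n) (i : ℕ) (hi : i ≤ n - 1) :
    IsLeast (Set.Ici (n : ℤ) \ Rset m ((List.range (i + 1)).map (fun j => (n : ℤ) + j)))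
        ((n : ℤ) + i + 1) ∧
      (∀ j : ℤ, (n : ℤ) ≤ j → j ≤ (n : ℤ) + i →
        j ∈ Rset m ((List.range (i + 1)).map (fun j => (n : ℤ) + j))) ∧
      ((n : ℤ) + i + 1) ∉ Rset m ((List.range (i + 1)).map (fun j => (n : ℤ) + j)) := by
  rw [map_add_coe_eq]
  set a := (List.range (i + 1)).map (fun j : ℕ => (n : ℤ) + j)
  have hrep : ∀ j : ℤ, (n : ℤ) ≤ j → j ≤ (n : ℤ) + i → j ∈ Rset m a := fun j h₁ h₂ =>
    mem_Rset_of_mem m (mem_map_range_add_iff.2 ⟨h₁, h₂⟩) (by omega)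
  have hnrep : ((n : ℤ) + i + 1) ∉ Rset m a := by
    intro h
    rcases Rset.mem_or_le hm hm5 (c := n) (by omega) (nodup_map_range_add n i)
      (fun x hx => (mem_map_range_add_iff.1 hx).1) h with h | h
    · have := mem_map_range_add_iff.1 h
      omega
    · omega
  refine ⟨⟨⟨Set.mem_Ici.2 (by omega), hnrep⟩, fun x ⟨hx, hxR⟩ => ?_⟩, hrep, hnrep⟩
  by_contra hlt
  exact hxR (hrep x hx (by omega))
end

section
/- Let m = 5 and let n ≥ 2 be an integer. Then for every integer i with 0 ≤ i ≤ n−2, the least element of T(n) \ R'((n, n+1, …, n+i)) is n+i+1, where R' is taken with respect to generalized pentagonal numbers. -/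
lemma gp5_nonneg {s : ℤ} (h : IsGP 5 s) : 0 ≤ s := by
  obtain ⟨u, hu⟩ := h
  nlinarith [sq_nonneg (6 * u - 1)]

lemma zipWith_sum_bound (lo hi : ℤ) :
    ∀ (a s : List ℤ), a.length = s.length → (∀ x ∈ a, lo ≤ x ∧ x ≤ hi) →
      (∀ y ∈ s, 0 ≤ y) →
      lo * s.sum ≤ (List.zipWith (· * ·) a s).sum ∧
        (List.zipWith (· * ·) a s).sum ≤ hi * s.sum := by
  intro a
  induction a with
  | nil =>
    intro s hlen _ _
    have : s = [] := by
      cases s with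
      | nil => rfl
      | cons b t => simp at hlen
    subst this; simp
  | cons x t ih =>
    intro s hlen ha hs
    cases s with
    | nil => simp at hlen
    | cons y r =>
      simp only [List.length_cons, Nat.succ.injEq] at hlen
      have hx := ha x (by simp)
      have hy := hs y (by simp)
      have ihr := ih r hlen (fun z hz => ha z (by simp [hz])) (fun z hz => hs z (by simp [hz]))
      have hr : 0 ≤ r.sum := List.sum_nonneg (fun z hz => hs z (by simp [hz]))
      simp only [List.zipWith_cons_cons, List.sum_cons]
      constructor
      · nlinarith [ihr.1, mul_le_mul_of_nonneg_right hx.1 hy]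
      · nlinarith [ihr.2, mul_le_mul_of_nonneg_right hx.2 hy]

lemma zipWith_map_map (f g : ℕ → ℤ) (l : List ℕ) :
    List.zipWith (· * ·) (l.map f) (l.map g) = l.map (fun k => f k * g k) := by
  induction l with
  | nil => rfl
  | cons x t ih => simp [ih]

lemma range_map_cast (n i : ℕ) : ((List.range (i + 1)).map (fun j => (n : ℤ) + j)) =
    (List.range (i + 1)).map (fun k : ℕ => (n : ℤ) + k) := by
  rw [show (do let a ← List.range (i+1); pure ((a:ℤ))) = (List.range (i+1)).map (fun k : ℕ => (k:ℤ)) from by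
    induction (List.range (i+1)) with
    | nil => rfl
    | cons x t ih => simp_all [List.flatMap]]
  rw [List.map_map]
  rfl

/-- For `m = 5` and `n ≥ 2`: for `0 ≤ i ≤ n-2`, the least element of
`T(n) \ R'((n, n+1, …, n+i))` (with respect to generalized pentagonal numbers)
is `n+i+1`. -/
theorem psi_of_initial_segment_pentagonal (n : ℕ) (hn : 2 ≤ n) (i : ℕ) (hi : i ≤ n - 2) :
    IsLeast (Set.Ici (n : ℤ) \ Rset 5 ((List.range (i + 1)).map (fun j => (n : ℤ) + j)))
      ((n : ℤ) + i + 1) := by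
  have hin : (i : ℤ) + 2 ≤ (n : ℤ) := by
    have : i + 2 ≤ n := by omega
    exact_mod_cast this
  set a : List ℤ := (List.range (i + 1)).map (fun j => (n : ℤ) + j) with ha
  have ha2 : a = (List.range (i + 1)).map (fun k : ℕ => (n : ℤ) + k) := by
    rw [ha, range_map_cast]
  have hbound : ∀ x ∈ a, (n : ℤ) ≤ x ∧ x ≤ (n : ℤ) + i := by
    intro x hx
    rw [ha2, List.mem_map] at hx
    obtain ⟨j, hj, rfl⟩ := hx
    rw [List.mem_range] at hj
    constructor <;> omega
  constructor
  · constructor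
    · simp only [Set.mem_Ici]; omega
    · rintro ⟨hne, s, hlen, hgp, hsum⟩
      have hs0 : ∀ y ∈ s, (0:ℤ) ≤ y := fun y hy => gp5_nonneg (hgp y hy)
      have hb := zipWith_sum_bound (n : ℤ) ((n : ℤ) + i) a s hlen.symm hbound hs0
      rw [← hsum] at hb
      have hS : 0 ≤ s.sum := List.sum_nonneg hs0
      have hcase : s.sum = 0 ∨ s.sum = 1 ∨ 2 ≤ s.sum := by omega
      rcases hcase with h | h | h
      · rw [h, mul_zero, mul_zero] at hb; omega
      · rw [h, mul_one, mul_one] at hb; omega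
      · have : (n : ℤ) * 2 ≤ (n : ℤ) * s.sum :=
          mul_le_mul_of_nonneg_left h (by positivity)
        nlinarith [hb.1]
  · rintro x ⟨hx, hnot⟩
    by_contra hlt
    push_neg at hlt
    simp only [Set.mem_Ici] at hx
    apply hnot
    set j : ℕ := (x - n).toNat with hj
    have hjx : (j : ℤ) = x - n := Int.toNat_of_nonneg (by linarith)
    have hji : j < i + 1 := by
      have : (j : ℤ) < i + 1 := by rw [hjx]; linarith
      exact_mod_cast this
    refine ⟨by intro h; rw [h] at hx; omega, (List.range (i + 1)).map
      (fun k => if k = j then (1:ℤ) else 0),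
      by simp only [ha2, List.length_map, List.length_range], ?_, ?_⟩
    · intro y hy
      rw [List.mem_map] at hy
      obtain ⟨k, _, rfl⟩ := hy
      by_cases hk : k = j
      · rw [if_pos hk]; exact ⟨1, by norm_num⟩
      · rw [if_neg hk]; exact ⟨0, by norm_num⟩
    · rw [ha2, zipWith_map_map]
      have hfin : ((List.range (i + 1)).map
          (fun k => ((n : ℤ) + k) * (if k = j then (1:ℤ) else 0))).sum =
          ∑ k ∈ Finset.range (i + 1), ((n : ℤ) + k) * (if k = j then (1:ℤ) else 0) := rfl
      rw [hfin, Finset.sum_eq_single j]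
      · rw [if_pos rfl, mul_one]; omega
      · intro b _ hb; rw [if_neg hb, mul_zero]
      · intro h; exact absurd (Finset.mem_range.mpr hji) h
end

section
/- Let m ≥ 3 be an integer with m ≠ 5 and let n ≥ 2 be an integer. Then for every integer g with n ≤ g ≤ 2n, there exists a finite sequence b of positive integers such that R'(b) = T(n) \ {g}. -/
/-!
Let `b` consist of `n` (omitted if `g = n`) followed by `k ≥ m + 5` copies of each
`v ∈ [n + 1, 2n + 1] \ {g}`. Since `P_m(u) + P_m(-u) = (m - 2) u²`, Lagrange's four-square theorem
makes every nonnegative integer a sum of `k` generalized `m`-gonal numbers. Hence `b` represents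
every element `y` of the additive monoid generated by `[n + 1, 2n + 1] \ {g}`, and `n + y` when
`g ≠ n`; elementary arithmetic shows that these numbers cover `T(n) \ {g}`. Conversely, for
`m ≠ 5` a generalized `m`-gonal number is `0`, `1` or at least `3`, so a nonzero represented
number is an entry of `b` or at least `2n + 1 > g`.
-/

-- `Rset m a` is, by definition, the set of nonzero `x` with `IsRep m a x`.
def IsRep (m : ℤ) (a : List ℤ) (x : ℤ) : Prop :=
  ∃ s : List ℤ, s.length = a.length ∧ (∀ y ∈ s, IsGP m y) ∧ x = (List.zipWith (· * ·) a s).sum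

theorem IsGP.eq_zero_or_eq_one_or_three_le {m s : ℤ} (hm : 3 ≤ m) (hm5 : m ≠ 5) (h : IsGP m s) :
    s = 0 ∨ s = 1 ∨ 3 ≤ s := by
  obtain ⟨u, hu⟩ := h
  rcases (by omega : u = 0 ∨ u = 1 ∨ u = -1 ∨ u = -2 ∨ 2 ≤ u ∨ u ≤ -3) with h | h | h | h | h
  -- `P_m(-1) = m - 3`, which is `2` exactly when `m = 5`
  iterate 4 (subst h; ring_nf at hu; omega)
  -- `2 s = (m - 3) u (u - 1) + u (u + 1)`
  right; right
  rcases h with h | h <;>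
    nlinarith [mul_nonneg (by omega : (0:ℤ) ≤ m - 3) (by nlinarith : (0:ℤ) ≤ u * (u - 1))]

theorem exists_isGP (m u : ℤ) : ∃ y, IsGP m y ∧ 2 * y = (m - 2) * u ^ 2 - (m - 4) * u := by
  obtain ⟨t, ht⟩ := Int.even_mul_pred_self u
  have hy : 2 * ((m - 2) * t + u) = (m - 2) * u ^ 2 - (m - 4) * u := by
    linear_combination (2 - m) * ht
  exact ⟨_, ⟨u, hy⟩, hy⟩

namespace IsRep

variable {m : ℤ}

theorem zero (a : List ℤ) : IsRep m a 0 := by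
  refine ⟨List.replicate a.length 0, List.length_replicate, ?_, ?_⟩
  · intro y hy
    rw [List.eq_of_mem_replicate hy]
    exact ⟨0, by ring⟩
  · induction a with
    | nil => rfl
    | cons v a ih => simpa [List.replicate_succ] using ih

theorem singleton (v : ℤ) : IsRep m [v] v :=
  ⟨[1], rfl, by simpa using ⟨1, by ring⟩, by simp⟩

theorem append {a b : List ℤ} {x y : ℤ} (hx : IsRep m a x) (hy : IsRep m b y) :
    IsRep m (a ++ b) (x + y) := by
  obtain ⟨s, hs, hsGP, rfl⟩ := hx
  obtain ⟨t, ht, htGP, rfl⟩ := hy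
  refine ⟨s ++ t, by simp [hs, ht], fun y hy => ?_, ?_⟩
  · rcases List.mem_append.1 hy with h | h
    exacts [hsGP y h, htGP y h]
  · rw [List.zipWith_append hs.symm, List.sum_append]

theorem map_mul {a : List ℤ} {x : ℤ} (hx : IsRep m a x) (c : ℤ) :
    IsRep m (a.map (c * ·)) (c * x) := by
  obtain ⟨s, hs, hsGP, rfl⟩ := hx
  refine ⟨s, by simp [hs], hsGP, ?_⟩
  clear hsGP
  induction a generalizing s with
  | nil => simp
  | cons v a ih =>
    cases s with
    | nil => simp at hs
    | cons y s =>
      simp only [List.map_cons, List.zipWith_cons_cons, List.sum_cons, mul_add,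
        ih s (by simpa using hs)]
      ring

end IsRep

theorem isRep_pair (m u : ℤ) : IsRep m (List.replicate 2 1) ((m - 2) * u ^ 2) := by
  obtain ⟨y, hy, hy2⟩ := exists_isGP m u
  obtain ⟨z, hz, hz2⟩ := exists_isGP m (-u)
  refine ⟨[y, z], rfl, by simp [hy, hz], ?_⟩
  simp only [List.replicate, List.zipWith_cons_cons, List.zipWith_nil_left, List.sum_cons,
    List.sum_nil]
  have h2 : 2 * (y + z) = 2 * ((m - 2) * u ^ 2) := by linear_combination hy2 + hz2
  linarith

section SumsOfGP

variable {m : ℤ}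

theorem isRep_replicate_one_natCast (r : ℕ) : IsRep m (List.replicate r 1) r := by
  induction r with
  | zero => exact IsRep.zero []
  | succ r ih =>
    rw [List.replicate_succ', Nat.cast_succ]
    exact ih.append (IsRep.singleton 1)

/-- Write `M = (m - 2) A + r` with `0 ≤ r < m - 2` and `A` a sum of four squares `u ^ 2`;
then `8 + r ≤ m + 5` summands suffice. -/
theorem isRep_replicate_one (hm : 3 ≤ m) {k : ℕ} (hk : m + 5 ≤ k) {M : ℤ} (hM : 0 ≤ M) :
    IsRep m (List.replicate k 1) M := by
  have hm2 : 0 < m - 2 := by omega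
  obtain ⟨a, b, c, d, habcd⟩ := Nat.sum_four_squares (M / (m - 2)).toNat
  have hsq : (a : ℤ) ^ 2 + b ^ 2 + c ^ 2 + d ^ 2 = M / (m - 2) := by
    rw [← Int.toNat_of_nonneg (Int.ediv_nonneg hM hm2.le)]
    exact_mod_cast habcd
  have hr0 : 0 ≤ M % (m - 2) := Int.emod_nonneg _ hm2.ne'
  have hr1 : M % (m - 2) < m - 2 := Int.emod_lt_of_pos _ hm2
  have hrep := (((((isRep_pair m a).append (isRep_pair m b)).append (isRep_pair m c)).append
    (isRep_pair m d)).append (isRep_replicate_one_natCast (M % (m - 2)).toNat)).append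
    (IsRep.zero (List.replicate (k - 8 - (M % (m - 2)).toNat) 1))
  simp only [← List.replicate_add] at hrep
  convert hrep using 2
  · omega
  · rw [Int.toNat_of_nonneg hr0]
    linear_combination -Int.mul_ediv_add_emod M (m - 2) - (m - 2) * hsq

theorem isRep_replicate (hm : 3 ≤ m) {k : ℕ} (hk : m + 5 ≤ k) (v : ℤ) {M : ℤ} (hM : 0 ≤ M) :
    IsRep m (List.replicate k v) (v * M) := by
  simpa using (isRep_replicate_one hm hk hM).map_mul v

theorem isRep_flatMap_replicate (hm : 3 ≤ m) {k : ℕ} (hk : m + 5 ≤ k) (L : List ℤ) :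
    ∀ x ∈ AddSubmonoid.closure (L.toFinset : Set ℤ), IsRep m (L.flatMap (List.replicate k)) x := by
  induction L with
  | nil =>
    simp only [List.toFinset_nil, Finset.coe_empty, AddSubmonoid.closure_empty,
      AddSubmonoid.mem_bot]
    rintro x rfl
    exact IsRep.zero _
  | cons v L ih =>
    simp only [List.toFinset_cons, Finset.coe_insert, Set.insert_eq, AddSubmonoid.closure_union,
      AddSubmonoid.mem_sup, AddSubmonoid.mem_closure_singleton, List.flatMap_cons]
    rintro x ⟨_, ⟨j, rfl⟩, y, hy, rfl⟩
    rw [nsmul_eq_mul, mul_comm]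
    exact (isRep_replicate hm hk v (Nat.cast_nonneg j)).append (ih y hy)

end SumsOfGP

/-- Each term `v * s` of a representation is `0`, `v` or at least `3 v`, and two nonzero terms
already sum to at least `d`. -/
theorem IsRep.eq_zero_or_mem_or_le {m d : ℤ} (hm : 3 ≤ m) (hm5 : m ≠ 5) (hd : 0 ≤ d) {b : List ℤ}
    (hb : ∀ v ∈ b, d ≤ 3 * v) (hpair : b.Pairwise fun v w => d ≤ v + w) {x : ℤ}
    (hx : IsRep m b x) : x = 0 ∨ x ∈ b ∨ d ≤ x := by
  induction b generalizing x with
  | nil =>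
    obtain ⟨s, hs, -, rfl⟩ := hx
    simp
  | cons v b ih =>
    obtain ⟨_ | ⟨y, t⟩, hs, hsGP, rfl⟩ := hx
    · simp at hs
    rw [List.pairwise_cons] at hpair
    have htail := ih (fun w hw => hb w (List.mem_cons_of_mem _ hw)) hpair.2
      ⟨t, by simpa using hs, fun w hw => hsGP w (List.mem_cons_of_mem _ hw), rfl⟩
    simp only [List.zipWith_cons_cons, List.sum_cons, List.mem_cons]
    set z := (List.zipWith (· * ·) b t).sum
    have hz : z = 0 ∨ (z ∈ b ∧ d ≤ v + z ∧ d ≤ 3 * z) ∨ d ≤ z :=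
      htail.imp_right (Or.imp_left fun h => ⟨h, hpair.1 z h, hb z (List.mem_cons_of_mem _ h)⟩)
    have hv := hb v List.mem_cons_self
    rcases (hsGP y List.mem_cons_self).eq_zero_or_eq_one_or_three_le hm hm5 with rfl | rfl | hy
    · simp only [mul_zero, zero_add]
      tauto
    · rw [mul_one]
      omega
    · have : 3 * v ≤ v * y := by nlinarith
      omega

noncomputable def gapSet (n g : ℤ) : Finset ℤ := (Finset.Icc (n + 1) (2 * n + 1)).erase g

@[simp]
theorem mem_gapSet {n g v : ℤ} : v ∈ gapSet n g ↔ n + 1 ≤ v ∧ v ≤ 2 * n + 1 ∧ v ≠ g := by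
  simp only [gapSet, Finset.mem_erase, Finset.mem_Icc]
  tauto

section GapSet

variable {n g : ℤ}

theorem mem_closure_gapSet {v : ℤ} (h₁ : n + 1 ≤ v) (h₂ : v ≤ 2 * n + 1) (h₃ : v ≠ g) :
    v ∈ AddSubmonoid.closure (gapSet n g : Set ℤ) :=
  AddSubmonoid.subset_closure (mem_gapSet.2 ⟨h₁, h₂, h₃⟩)

/-- Apart from a few exceptions, which need the extra summand `n` or three summands,
`r` splits as `⌊r/2⌋ + ⌈r/2⌉` or `(⌊r/2⌋ - 1) + (⌈r/2⌉ + 1)`. -/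
theorem mem_or_sub_mem_closure_gapSet_of_le_of_le (hn : 2 ≤ n) (hg : g ≤ 2 * n) {r : ℤ}
    (hr₁ : 2 * n + 2 ≤ r) (hr₂ : r ≤ 4 * n + 2) :
    r ∈ AddSubmonoid.closure (gapSet n g : Set ℤ) ∨
      (n ≠ g ∧ r - n ∈ AddSubmonoid.closure (gapSet n g : Set ℤ)) := by
  by_cases hhalf : r / 2 ≠ g ∧ r - r / 2 ≠ g
  · left
    rw [show r = r / 2 + (r - r / 2) by ring]
    exact add_mem (mem_closure_gapSet (by omega) (by omega) hhalf.1)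
      (mem_closure_gapSet (by omega) (by omega) hhalf.2)
  rcases (by omega : r ≤ 2 * n + 3 ∨ r = 4 * n + 1 ∨ 2 * n + 4 ≤ r ∧ r ≤ 4 * n) with h | h | h
  · exact Or.inr ⟨by omega, mem_closure_gapSet (by omega) (by omega) (by omega)⟩
  · left
    rw [show r = n + 1 + (n + 1) + (2 * n - 1) by omega]
    exact add_mem (add_mem (mem_closure_gapSet le_rfl (by omega) (by omega))
      (mem_closure_gapSet le_rfl (by omega) (by omega)))
      (mem_closure_gapSet (by omega) (by omega) (by omega))
  · left
    rw [show r = (r / 2 - 1) + (r - r / 2 + 1) by ring]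
    exact add_mem (mem_closure_gapSet (by omega) (by omega) (by omega))
      (mem_closure_gapSet (by omega) (by omega) (by omega))

theorem mem_or_sub_mem_closure_gapSet (hn : 2 ≤ n) (hg : g ≤ 2 * n) {x : ℤ} (hx : n ≤ x)
    (hxg : x ≠ g) :
    x ∈ AddSubmonoid.closure (gapSet n g : Set ℤ) ∨
      (n ≠ g ∧ x - n ∈ AddSubmonoid.closure (gapSet n g : Set ℤ)) := by
  rcases le_or_gt x (2 * n + 1) with hx₁ | hx₁
  · by_cases hxn : x = n
    · exact Or.inr ⟨hxn ▸ hxg, by simp [hxn, zero_mem]⟩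
    · exact Or.inl (mem_closure_gapSet (by omega) hx₁ hxg)
  obtain ⟨q, hq, hr₁, hr₂⟩ :
      ∃ q : ℤ, 0 ≤ q ∧ 2 * n + 2 ≤ x - (2 * n + 1) * q ∧ x - (2 * n + 1) * q ≤ 4 * n + 2 := by
    have := Int.emod_nonneg (x - (2 * n + 2)) (b := 2 * n + 1) (by omega)
    have := Int.emod_lt_of_pos (x - (2 * n + 2)) (b := 2 * n + 1) (by omega)
    have := Int.mul_ediv_add_emod (x - (2 * n + 2)) (2 * n + 1)
    exact ⟨(x - (2 * n + 2)) / (2 * n + 1), Int.ediv_nonneg (by omega) (by omega),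
      by omega, by omega⟩
  have hqC : (2 * n + 1) * q ∈ AddSubmonoid.closure (gapSet n g : Set ℤ) := by
    have := AddSubmonoid.nsmul_mem _
      (mem_closure_gapSet (n := n) (g := g) (by omega) le_rfl (by omega)) q.toNat
    rwa [nsmul_eq_mul, Int.toNat_of_nonneg hq, mul_comm] at this
  rcases mem_or_sub_mem_closure_gapSet_of_le_of_le hn hg hr₁ hr₂ with h | ⟨hng, h⟩
  · left
    rw [show x = (2 * n + 1) * q + (x - (2 * n + 1) * q) by ring]
    exact add_mem hqC h
  · refine Or.inr ⟨hng, ?_⟩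
    rw [show x - n = (2 * n + 1) * q + (x - (2 * n + 1) * q - n) by ring]
    exact add_mem hqC h

end GapSet

noncomputable def gapSeq (n g : ℤ) (k : ℕ) : List ℤ :=
  [n].filter (· ≠ g) ++ (gapSet n g).toList.flatMap (List.replicate k)

section GapSeq

variable {n g : ℤ} {k : ℕ}

theorem eq_or_mem_gapSet_of_mem_gapSeq {v : ℤ} (hv : v ∈ gapSeq n g k) :
    (v = n ∧ v ≠ g) ∨ v ∈ gapSet n g := by
  simp only [gapSeq, List.mem_append, List.mem_filter, List.mem_singleton, List.mem_flatMap,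
    Finset.mem_toList, List.mem_replicate, decide_eq_true_eq] at hv
  rcases hv with h | ⟨w, hw, -, rfl⟩
  exacts [Or.inl h, Or.inr hw]

theorem pairwise_gapSeq : (gapSeq n g k).Pairwise fun v w => 2 * n + 1 ≤ v + w := by
  have hblock : ∀ v ∈ (gapSet n g).toList.flatMap (List.replicate k), n + 1 ≤ v := by
    simp only [List.mem_flatMap, Finset.mem_toList, List.mem_replicate]
    rintro v ⟨w, hw, -, rfl⟩
    exact (mem_gapSet.1 hw).1
  rw [gapSeq, List.pairwise_append]
  refine ⟨(List.pairwise_singleton _ n).filter _,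
    List.pairwise_of_forall_mem_list fun v hv w hw => ?_, fun v hv w hw => ?_⟩
  · linarith [hblock v hv, hblock w hw]
  · rw [(List.mem_filter.1 hv).1 |> List.mem_singleton.1]
    linarith [hblock w hw]

end GapSeq

theorem almost_universal_exists_general (m : ℤ) (hm : 3 ≤ m) (hm5 : m ≠ 5)
    (n : ℤ) (hn : 2 ≤ n) (g : ℤ) (hg2 : g ≤ 2 * n) :
    ∃ b : List ℤ, (∀ x ∈ b, 0 < x) ∧ Rset m b = Set.Ici n \ {g} := by
  obtain ⟨k, hk⟩ : ∃ k : ℕ, m + 5 ≤ k := ⟨(m + 5).toNat, Int.self_le_toNat _⟩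
  have hmem {v : ℤ} (hv : v ∈ gapSeq n g k) : n ≤ v ∧ v ≤ 2 * n + 1 ∧ v ≠ g := by
    rcases eq_or_mem_gapSet_of_mem_gapSeq hv with h | h
    · omega
    · rw [mem_gapSet] at h
      omega
  refine ⟨gapSeq n g k, fun v hv => by linarith [hmem hv], Set.ext fun x => ?_⟩
  simp only [Set.mem_sdiff, Set.mem_Ici, Set.mem_singleton_iff]
  constructor
  · rintro ⟨hx0, hx⟩
    rcases IsRep.eq_zero_or_mem_or_le (d := 2 * n + 1) hm hm5 (by omega)
      (fun v hv => by linarith [hmem hv]) pairwise_gapSeq hx with h | h | h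
    · exact absurd h hx0
    · exact ⟨(hmem h).1, (hmem h).2.2⟩
    · omega
  · rintro ⟨hxn, hxg⟩
    refine ⟨by omega, ?_⟩
    have hblocks := isRep_flatMap_replicate hm hk (gapSet n g).toList
    rw [Finset.toList_toFinset] at hblocks
    rcases mem_or_sub_mem_closure_gapSet hn hg2 hxn hxg with h | ⟨hng, h⟩
    · rw [← zero_add x]
      exact (IsRep.zero _).append (hblocks x h)
    · have hhead : [n].filter (· ≠ g) = [n] := by simp [hng]
      change IsRep m ([n].filter (· ≠ g) ++ _) x
      rw [hhead, show x = n + (x - n) by ring]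
      exact (IsRep.singleton n).append (hblocks _ h)

/-- For `m ≥ 3`, `m ≠ 5` and `n ≥ 2`: for every `g` with `n ≤ g ≤ 2n` there is a sequence
`b` of positive integers with `R'(b) = T(n) \ {g}`. -/
theorem almost_universal_exists (m : ℤ) (hm : 3 ≤ m) (hm5 : m ≠ 5)
    (n : ℤ) (hn : 2 ≤ n) (g : ℤ) (hg1 : n ≤ g) (hg2 : g ≤ 2 * n) :
    ∃ b : List ℤ, (∀ x ∈ b, 0 < x) ∧ Rset m b = Set.Ici n \ {g} :=
  almost_universal_exists_general m hm hm5 n hn g hg2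
end
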